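/- Let d and K be positive integers, λ > 0, H > 0, and let φ^(1),…,φ^(K) ∈ ℝ^d satisfy ‖φ^(k)‖₂² ≤ H for all k. Define V_0 := λ·I_d and V_k := λ·I_d + ∑_{j=1}^{k} φ^(j)(φ^(j))ᵀ. Then ∑_{k=1}^K min{1, φ^(k)ᵀ V_{k−1}^{-1} φ^(k)} ≤ 2·d·log(1 + K·H/(d·λ)). -/

import Mathlib

open scoped BigOperators Matrix

noncomputable section

/-- Design matrix `V_k := λ·I_d + ∑_{j=1}^{k} φ^(j) (φ^(j))ᵀ` (so `V_0 = λ·I_d`). -/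
def designMat (d : ℕ) (lam : ℝ) (φ : ℕ → Fin d → ℝ) (k : ℕ) :
    Matrix (Fin d) (Fin d) ℝ :=
  lam • (1 : Matrix (Fin d) (Fin d) ℝ) +
    ∑ j ∈ Finset.Icc 1 k, Matrix.vecMulVec (φ j) (φ j)

/-! Each rank-one update multiplies `det V` by `1 + φᵀ V⁻¹ φ` (matrix determinant lemma), so
`∑ log (1 + φ_kᵀ V_{k-1}⁻¹ φ_k)` telescopes to `log (det V_K / λ^d)`. By AM-GM on the eigenvalues,
`det V_K ≤ (tr V_K / d)^d ≤ (λ + K H / d)^d`, and `min 1 x ≤ 2 log (1 + x)` for `x ≥ 0`. -/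

open Finset Real

theorem Real.sum_log_le_card_mul_log_average {ι : Type*} (s : Finset ι) {z : ι → ℝ}
    (hz : ∀ i ∈ s, 0 < z i) :
    ∑ i ∈ s, log (z i) ≤ #s * log ((∑ i ∈ s, z i) / #s) := by
  rcases s.eq_empty_or_nonempty with rfl | hs
  · simp
  have hcard : (0 : ℝ) < #s := by exact_mod_cast hs.card_pos
  have jensen := strictConcaveOn_log_Ioi.concaveOn.le_map_sum (t := s) (w := fun _ ↦ (#s : ℝ)⁻¹)
    (p := z) (fun _ _ ↦ by positivity) (by simp [hcard.ne']) hz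
  simp only [smul_eq_mul, inv_mul_eq_div] at jensen
  rwa [← sum_div, ← sum_div, div_le_iff₀' hcard] at jensen

theorem Matrix.PosDef.log_det_le {n : Type*} [Fintype n] [DecidableEq n] {A : Matrix n n ℝ}
    (hA : A.PosDef) : log A.det ≤ Fintype.card n * log (A.trace / Fintype.card n) := by
  have h := sum_log_le_card_mul_log_average univ fun i _ ↦ hA.eigenvalues_pos i
  rw [← log_prod fun i _ ↦ (hA.eigenvalues_pos i).ne'] at h
  simpa [hA.isHermitian.det_eq_prod_eigenvalues, hA.isHermitian.trace_eq_sum_eigenvalues] using h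

theorem Matrix.det_add_vecMulVec {n R : Type*} [Fintype n] [DecidableEq n] [CommRing R]
    {A : Matrix n n R} (hA : IsUnit A.det) (u v : n → R) :
    (A + vecMulVec u v).det = A.det * (1 + v ⬝ᵥ A⁻¹ *ᵥ u) := by
  rw [vecMulVec_eq Unit u v, det_add_replicateCol_mul_replicateRow hA, dotProduct_mulVec]
  congr 1
  simp [det_unique, mul_apply, dotProduct, vecMul]

theorem Real.min_one_le_two_mul_log_one_add {x : ℝ} (hx : 0 ≤ x) :
    min 1 x ≤ 2 * log (1 + x) := by
  rcases le_total x 1 with h | h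
  · have hlog : x / (1 + x) ≤ log (1 + x) :=
      calc x / (1 + x) = 1 - (1 + x)⁻¹ := by field_simp; ring
        _ ≤ log (1 + x) := one_sub_inv_le_log_of_pos (by linarith)
    have : x / 2 ≤ x / (1 + x) := div_le_div_of_nonneg_left hx (by linarith) (by linarith)
    rw [min_eq_right h]
    linarith
  · have : log 2 ≤ log (1 + x) := log_le_log (by norm_num) (by linarith)
    rw [min_eq_left h]
    linarith [log_two_gt_d9]

section designMat

variable {d : ℕ} {lam : ℝ} (φ : ℕ → Fin d → ℝ)

theorem designMat_zero : designMat d lam φ 0 = lam • 1 := by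
  simp [designMat]

theorem designMat_succ (k : ℕ) :
    designMat d lam φ (k + 1) = designMat d lam φ k + Matrix.vecMulVec (φ (k + 1)) (φ (k + 1)) := by
  rw [designMat, designMat, sum_Icc_succ_top (by omega), add_assoc]

theorem trace_designMat (k : ℕ) :
    (designMat d lam φ k).trace = d * lam + ∑ j ∈ Icc 1 k, φ j ⬝ᵥ φ j := by
  simp [designMat, Matrix.trace_sum, mul_comm]

theorem designMat_posDef (hlam : 0 < lam) (k : ℕ) : (designMat d lam φ k).PosDef := by
  induction k with
  | zero =>
    rw [designMat_zero, Matrix.smul_one_eq_diagonal]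
    exact Matrix.PosDef.diagonal fun _ ↦ hlam
  | succ k ih =>
    rw [designMat_succ]
    simpa using ih.add_posSemidef (Matrix.posSemidef_vecMulVec_self_star (φ (k + 1)))

theorem dotProduct_inv_designMat_mulVec_nonneg (hlam : 0 < lam) (k : ℕ) (x : Fin d → ℝ) :
    0 ≤ x ⬝ᵥ (designMat d lam φ k)⁻¹ *ᵥ x := by
  simpa using (designMat_posDef φ hlam k).inv.posSemidef.dotProduct_mulVec_nonneg x

theorem det_designMat (hlam : 0 < lam) (K : ℕ) :
    (designMat d lam φ K).det =
      lam ^ d * ∏ k ∈ Icc 1 K, (1 + φ k ⬝ᵥ (designMat d lam φ (k - 1))⁻¹ *ᵥ φ k) := by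
  induction K with
  | zero => simp [designMat_zero]
  | succ K ih =>
    rw [prod_Icc_succ_top (by omega), ← mul_assoc, ← ih, designMat_succ,
      Matrix.det_add_vecMulVec (designMat_posDef φ hlam K).det_pos.ne'.isUnit, Nat.add_sub_cancel]

theorem sum_log_one_add_eq_log_det_designMat (hlam : 0 < lam) (K : ℕ) :
    ∑ k ∈ Icc 1 K, log (1 + φ k ⬝ᵥ (designMat d lam φ (k - 1))⁻¹ *ᵥ φ k) =
      log (designMat d lam φ K).det - d * log lam := by
  have hpos (k : ℕ) : 0 < 1 + φ k ⬝ᵥ (designMat d lam φ (k - 1))⁻¹ *ᵥ φ k := by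
    linarith [dotProduct_inv_designMat_mulVec_nonneg φ hlam (k - 1) (φ k)]
  rw [det_designMat φ hlam, log_mul (by positivity) (prod_pos fun k _ ↦ hpos k).ne', log_pow,
    log_prod fun k _ ↦ (hpos k).ne']
  ring

theorem log_det_designMat_le (hlam : 0 < lam) (hd : 0 < d) {K : ℕ} {H : ℝ} (hH : 0 ≤ H)
    (hφ : ∀ k ∈ Icc 1 K, φ k ⬝ᵥ φ k ≤ H) :
    log (designMat d lam φ K).det ≤ d * (log lam + log (1 + K * H / (d * lam))) := by
  have hd' : (0 : ℝ) < d := by exact_mod_cast hd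
  have : Nonempty (Fin d) := Fin.pos_iff_nonempty.mp hd
  have htrace : (designMat d lam φ K).trace / d ≤ lam * (1 + K * H / (d * lam)) := by
    have hsum := sum_le_card_nsmul _ _ _ hφ
    simp only [Nat.card_Icc, add_tsub_cancel_right, nsmul_eq_mul] at hsum
    rw [trace_designMat, div_le_iff₀ hd']
    field_simp
    linarith
  rw [← log_mul hlam.ne' (by positivity)]
  refine (designMat_posDef φ hlam K).log_det_le.trans ?_
  rw [Fintype.card_fin]
  gcongr
  exact div_pos (designMat_posDef φ hlam K).trace_pos hd'

end designMat

theorem elliptical_potential_bound_general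
    (d K : ℕ) (hd : 0 < d)
    (lam : ℝ) (hlam : 0 < lam) (H : ℝ) (hH : 0 < H)
    (φ : ℕ → Fin d → ℝ)
    (hφ : ∀ k ∈ Finset.Icc 1 K, φ k ⬝ᵥ φ k ≤ H) :
    ∑ k ∈ Finset.Icc 1 K,
        min 1 (φ k ⬝ᵥ (designMat d lam φ (k - 1))⁻¹.mulVec (φ k)) ≤
      2 * d * Real.log (1 + K * H / (d * lam)) :=
  calc ∑ k ∈ Icc 1 K, min 1 (φ k ⬝ᵥ (designMat d lam φ (k - 1))⁻¹ *ᵥ φ k)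
      ≤ 2 * ∑ k ∈ Icc 1 K, log (1 + φ k ⬝ᵥ (designMat d lam φ (k - 1))⁻¹ *ᵥ φ k) := by
        rw [mul_sum]
        exact sum_le_sum fun k _ ↦ min_one_le_two_mul_log_one_add
          (dotProduct_inv_designMat_mulVec_nonneg φ hlam (k - 1) (φ k))
    _ = 2 * (log (designMat d lam φ K).det - d * log lam) := by
        rw [sum_log_one_add_eq_log_det_designMat φ hlam]
    _ ≤ 2 * d * log (1 + K * H / (d * lam)) := by
        linarith [log_det_designMat_le φ hlam hd hH.le hφ]

/-- Elliptical potential bound invoked in the proof of Lemma D.1 of the paper: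
`∑_{k=1}^K min{1, φ^(k)ᵀ V_{k-1}⁻¹ φ^(k)} ≤ 2·d·log(1 + K·H/(d·λ))`. -/
theorem elliptical_potential_bound
    (d K : ℕ) (hd : 0 < d) (hK : 0 < K)
    (lam : ℝ) (hlam : 0 < lam) (H : ℝ) (hH : 0 < H)
    (φ : ℕ → Fin d → ℝ)
    (hφ : ∀ k ∈ Finset.Icc 1 K, φ k ⬝ᵥ φ k ≤ H) :
    ∑ k ∈ Finset.Icc 1 K,
        min 1 (φ k ⬝ᵥ (designMat d lam φ (k - 1))⁻¹.mulVec (φ k)) ≤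
      2 * d * Real.log (1 + K * H / (d * lam)) :=
  elliptical_potential_bound_general d K hd lam hlam H hH φ hφ
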